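/- arXiv:2504.17861 — 2 statements merged into one kernel-verified Lean document; each statement's English description precedes it below -/
import Mathlib

section
/- Let C ∈ ℝ^{n×n×n₃} be T-symmetric positive definite, D ∈ ℝ^{n×l×n₃}, and let X_k, R_k, P_k be the iterates of Algorithm 1 from an arbitrary initial tensor X₁ ∈ ℝ^{n×l×n₃}. If P₁,…,P_k are all nonzero (so that all iterates up to index k+1 are defined), then the residuals are mutually orthogonal and the directions are mutually C-orthogonal: ⟨R_s, R_t⟩ = 0 and ⟨C⋆P_s, P_t⟩ = 0 for all 1 ≤ s, t ≤ k+1 with s ≠ t. -/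
/-!
Flattening a tensor into the `n n₃ × l` matrix of its frontal slices (`tUnfold`) turns `C ⋆ ·`
into left multiplication by `bcirc C` and `⟨·, ·⟩` into the Frobenius pairing `tr (Xᵀ Y)`, while
`Tr((Pᵀ ⋆ R)^{(1)}) = ⟨P, R⟩`. Hence Algorithm 1 is the conjugate gradient method for the operator
`A = C ⋆ ·`, which is self-adjoint since `bcirc C` is symmetric, and has `⟨X, A X⟩ ≠ 0` for `X ≠ 0`.

For conjugate gradients with respect to a symmetric anisotropic form and such an `A`, the relations
`⟨R_s, R_t⟩ = ⟨P_s, A P_t⟩ = ⟨P_s, R_t⟩ = 0` (`s < t`) propagate in `t`: the step sizes are chosen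
so that `P_t ⊥ R_{t+1}` and `P_t ⊥_A P_{t+1}`, each `R_s` is a combination of `P_s` and `P_{s-1}`,
and each `A P_s` is a nonzero multiple of `R_s - R_{s+1}`.
-/

open Matrix Filter Topology

noncomputable section

/-- A third-order real tensor of size `n₁ × n₂ × n₃`, identified with the family of its
frontal slices indexed by `ZMod n₃`. -/
abbrev Tensor (n₁ n₂ n₃ : ℕ) := ZMod n₃ → Matrix (Fin n₁) (Fin n₂) ℝ

/-- The T-product of third-order tensors: `(C ⋆ D)(k) = ∑ j, C (k - j) * D j`. -/
def tProd {n₁ n₂ l n₃ : ℕ} [NeZero n₃] (C : Tensor n₁ n₂ n₃) (D : Tensor n₂ l n₃) :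
    Tensor n₁ l n₃ :=
  fun k => ∑ j : ZMod n₃, C (k - j) * D j

/-- The tensor transpose: `(Cᵀ)(k) = (C (-k))ᵀ`. -/
def tTrans {n₁ n₂ n₃ : ℕ} (C : Tensor n₁ n₂ n₃) : Tensor n₂ n₁ n₃ :=
  fun k => (C (-k))ᵀ

/-- The matrix trace of the first frontal slice of a tensor with square slices. -/
def trFirst {m n₃ : ℕ} (S : Tensor m m n₃) : ℝ :=
  (S 0).trace

/-- The inner product `⟨C, D⟩ = ∑ k i j, C k i j * D k i j`. -/
def tInner {n₁ n₂ n₃ : ℕ} [NeZero n₃] (C D : Tensor n₁ n₂ n₃) : ℝ :=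
  ∑ k : ZMod n₃, ∑ i : Fin n₁, ∑ j : Fin n₂, C k i j * D k i j

/-- The Frobenius norm `‖C‖ = √⟨C, C⟩`. -/
def tNorm {n₁ n₂ n₃ : ℕ} [NeZero n₃] (C : Tensor n₁ n₂ n₃) : ℝ :=
  Real.sqrt (tInner C C)

/-- The block circulant matrix of a tensor: its `(k, l)` block is `C (k - l)`. -/
def bCirc {n n₃ : ℕ} [NeZero n₃] (C : Tensor n n n₃) :
    Matrix (ZMod n₃ × Fin n) (ZMod n₃ × Fin n) ℝ :=
  fun p q => C (p.1 - q.1) p.2 q.2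

/-- `C` is T-symmetric positive definite: `Cᵀ = C` and `bCirc C` is positive definite. -/
def TSymPD {n n₃ : ℕ} [NeZero n₃] (C : Tensor n n n₃) : Prop :=
  tTrans C = C ∧ (bCirc C).PosDef

theorem Matrix.PosDef.eq_zero_of_trace_conjTranspose_mul_mul_eq_zero {m ι R : Type*}
    [Fintype m] [Fintype ι] [Ring R] [PartialOrder R] [StarRing R] [IsOrderedAddMonoid R]
    {M : Matrix m m R} (hM : M.PosDef) {U : Matrix m ι R} (h : (Uᴴ * (M * U)).trace = 0) :
    U = 0 := by
  have hdiag : ∀ c, (Uᴴ * (M * U)) c c = star (fun p ↦ U p c) ⬝ᵥ (M *ᵥ fun p ↦ U p c) := by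
    intro c
    simp [Matrix.mul_apply, dotProduct, mulVec]
  have hnonneg : ∀ c ∈ Finset.univ, 0 ≤ (Uᴴ * (M * U)).diag c := fun c _ ↦ by
    rw [Matrix.diag_apply, hdiag]
    exact hM.posSemidef.dotProduct_mulVec_nonneg _
  have hzero := (Finset.sum_eq_zero_iff_of_nonneg hnonneg).mp h
  ext p c
  by_contra hpc
  have hv : (fun p ↦ U p c) ≠ 0 := fun h0 ↦ hpc (congrFun h0 p)
  exact (hM.dotProduct_mulVec_pos hv).ne' ((hdiag c).symm.trans (hzero c (Finset.mem_univ c)))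

section ConjugateGradient

variable {K V : Type*} [Field K] [AddCommGroup V] [Module K V]

structure IsCGSequence (B : LinearMap.BilinForm K V) (A : V →ₗ[K] V) (D : V)
    (X R P : ℕ → V) : Prop where
  residual : ∀ i, 1 ≤ i → R i = D - A (X i)
  dir_one : P 1 = R 1
  iterate_succ : ∀ i, 1 ≤ i → X (i + 1) = X i + (B (P i) (R i) / B (P i) (A (P i))) • P i
  dir_succ : ∀ i, 1 ≤ i →
    P (i + 1) = R (i + 1) - (B (P i) (A (R (i + 1))) / B (P i) (A (P i))) • P i

def CGOrthogonalUpTo (B : LinearMap.BilinForm K V) (A : V →ₗ[K] V) (R P : ℕ → V) (m : ℕ) :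
    Prop :=
  ∀ s t, 1 ≤ s → s < t → t ≤ m →
    B (R s) (R t) = 0 ∧ B (P s) (A (P t)) = 0 ∧ B (P s) (R t) = 0

namespace IsCGSequence

variable {B : LinearMap.BilinForm K V} {A : V →ₗ[K] V} {D : V} {X R P : ℕ → V}

theorem residual_succ (h : IsCGSequence B A D X R P) {i : ℕ} (hi : 1 ≤ i) :
    R (i + 1) = R i - (B (P i) (R i) / B (P i) (A (P i))) • A (P i) := by
  rw [h.residual _ (by omega), h.iterate_succ i hi, map_add, map_smul, h.residual i hi]
  abel

theorem residual_succ_eq_add (h : IsCGSequence B A D X R P) {i : ℕ} (hi : 1 ≤ i) :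
    R (i + 1) = P (i + 1) + (B (P i) (A (R (i + 1))) / B (P i) (A (P i))) • P i := by
  rw [h.dir_succ i hi]
  abel

theorem dir_inner_residual_succ (h : IsCGSequence B A D X R P) {i : ℕ} (hi : 1 ≤ i)
    (hd : B (P i) (A (P i)) ≠ 0) : B (P i) (R (i + 1)) = 0 := by
  rw [h.residual_succ hi, map_sub, map_smul, smul_eq_mul, div_mul_cancel₀ _ hd, sub_self]

theorem dir_conj_succ (h : IsCGSequence B A D X R P) {i : ℕ} (hi : 1 ≤ i)
    (hd : B (P i) (A (P i)) ≠ 0) : B (P i) (A (P (i + 1))) = 0 := by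
  rw [h.dir_succ i hi, map_sub, map_smul, map_sub, map_smul, smul_eq_mul,
    div_mul_cancel₀ _ hd, sub_self]

theorem residual_ne_zero (h : IsCGSequence B A D X R P) {s : ℕ} (hs : 1 ≤ s)
    (hP : P s ≠ 0) : R s ≠ 0 := by
  obtain _ | _ | i := s
  · omega
  · exact h.dir_one ▸ hP
  · intro hR
    rw [h.dir_succ (i + 1) (by omega), hR] at hP
    simp at hP

theorem residual_inner_eq_zero (h : IsCGSequence B A D X R P) {m : ℕ} {v : V}
    (hv : ∀ s, 1 ≤ s → s ≤ m → B (P s) v = 0) {s : ℕ} (hs : 1 ≤ s) (hsm : s ≤ m) :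
    B (R s) v = 0 := by
  obtain _ | _ | i := s
  · omega
  · exact h.dir_one ▸ hv 1 le_rfl hsm
  · rw [h.residual_succ_eq_add (by omega), map_add, map_smul, LinearMap.add_apply,
      LinearMap.smul_apply, hv _ hs hsm, hv (i + 1) (by omega) (by omega), smul_zero, add_zero]

theorem dir_inner_residual_self (h : IsCGSequence B A D X R P) {m : ℕ}
    (ih : CGOrthogonalUpTo B A R P m) {s : ℕ} (hs : 1 ≤ s) (hsm : s ≤ m) :
    B (P s) (R s) = B (R s) (R s) := by
  obtain _ | _ | i := s
  · omega
  · rw [h.dir_one]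
  · rw [h.dir_succ (i + 1) (by omega), map_sub, map_smul, LinearMap.sub_apply, LinearMap.smul_apply,
      (ih (i + 1) (i + 2) (by omega) (by omega) hsm).2.2, smul_zero, sub_zero]

theorem dir_inner_residual_succ_of_orthogonal (h : IsCGSequence B A D X R P) {m : ℕ}
    (ih : CGOrthogonalUpTo B A R P m) (hm : 1 ≤ m) (hd : B (P m) (A (P m)) ≠ 0) {s : ℕ}
    (hs : 1 ≤ s) (hsm : s ≤ m) : B (P s) (R (m + 1)) = 0 := by
  rcases hsm.lt_or_eq with hlt | rfl
  · obtain ⟨-, hconj, hres⟩ := ih s m hs hlt le_rfl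
    rw [h.residual_succ hm, map_sub, map_smul, hres, hconj, smul_zero, sub_zero]
  · exact h.dir_inner_residual_succ hm hd

theorem dir_conj_succ_of_orthogonal (h : IsCGSequence B A D X R P)
    (hB : ∀ x, B x x = 0 → x = 0) (hA : LinearMap.IsAdjointPair B B A A)
    (hAdef : ∀ x, B x (A x) = 0 → x = 0) {m : ℕ} (ih : CGOrthogonalUpTo B A R P m)
    (hm : 1 ≤ m) (hP : ∀ s, 1 ≤ s → s ≤ m → P s ≠ 0) {s : ℕ} (hs : 1 ≤ s) (hsm : s ≤ m) :
    B (P s) (A (P (m + 1))) = 0 := by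
  have hd : ∀ j, 1 ≤ j → j ≤ m → B (P j) (A (P j)) ≠ 0 :=
    fun j hj hjm h0 ↦ hP j hj hjm (hAdef _ h0)
  rcases hsm.lt_or_eq with hlt | rfl
  · have hRR : ∀ j, 1 ≤ j → j ≤ m → B (R j) (R (m + 1)) = 0 := fun j hj hjm ↦
      h.residual_inner_eq_zero
        (fun i hi him ↦ h.dir_inner_residual_succ_of_orthogonal ih hm (hd m hm le_rfl) hi him)
        hj hjm
    have hα : B (P s) (R s) / B (P s) (A (P s)) ≠ 0 := by
      rw [h.dir_inner_residual_self ih hs hsm]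
      exact div_ne_zero (fun h0 ↦ h.residual_ne_zero hs (hP s hs hsm) (hB _ h0)) (hd s hs hsm)
    have hAP : B (A (P s)) (R (m + 1)) = 0 := by
      have hstep : (B (P s) (R s) / B (P s) (A (P s))) • A (P s) = R s - R (s + 1) := by
        rw [h.residual_succ hs]
        abel
      refine (mul_eq_zero.mp ?_).resolve_left hα
      rw [← smul_eq_mul, ← LinearMap.smul_apply, ← map_smul, hstep, map_sub, LinearMap.sub_apply,
        hRR s hs hsm, hRR (s + 1) (by omega) hlt, sub_self]
    rw [h.dir_succ m hm, map_sub, map_smul, map_sub, map_smul, ← hA, hAP,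
      (ih s m hs hlt le_rfl).2.1, smul_zero, sub_zero]
  · exact h.dir_conj_succ hm (hd s hs le_rfl)

theorem cgOrthogonalUpTo_succ (h : IsCGSequence B A D X R P)
    (hB : ∀ x, B x x = 0 → x = 0) (hA : LinearMap.IsAdjointPair B B A A)
    (hAdef : ∀ x, B x (A x) = 0 → x = 0) {m : ℕ} (ih : CGOrthogonalUpTo B A R P m)
    (hm : 1 ≤ m) (hP : ∀ s, 1 ≤ s → s ≤ m → P s ≠ 0) : CGOrthogonalUpTo B A R P (m + 1) := by
  intro s t hs hst ht
  rcases Nat.le_succ_iff.mp ht with htm | rfl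
  · exact ih s t hs hst htm
  · have hres : ∀ j, 1 ≤ j → j ≤ m → B (P j) (R (m + 1)) = 0 := fun j hj hjm ↦
      h.dir_inner_residual_succ_of_orthogonal ih hm (fun h0 ↦ hP m hm le_rfl (hAdef _ h0)) hj hjm
    exact ⟨h.residual_inner_eq_zero hres hs (by omega),
      h.dir_conj_succ_of_orthogonal hB hA hAdef ih hm hP hs (by omega), hres s hs (by omega)⟩

theorem cgOrthogonalUpTo (h : IsCGSequence B A D X R P)
    (hB : ∀ x, B x x = 0 → x = 0) (hA : LinearMap.IsAdjointPair B B A A)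
    (hAdef : ∀ x, B x (A x) = 0 → x = 0) (k : ℕ) (hP : ∀ i, 1 ≤ i → i ≤ k → P i ≠ 0) :
    CGOrthogonalUpTo B A R P (k + 1) := by
  induction k with
  | zero => intro s t hs hst ht; omega
  | succ k ih =>
    exact h.cgOrthogonalUpTo_succ hB hA hAdef (ih fun i hi hik ↦ hP i hi (by omega))
      (by omega) hP

theorem pairwise_orthogonal (h : IsCGSequence B A D X R P) (hBs : B.IsSymm)
    (hB : ∀ x, B x x = 0 → x = 0) (hA : LinearMap.IsAdjointPair B B A A)
    (hAdef : ∀ x, B x (A x) = 0 → x = 0) (k : ℕ) (hP : ∀ i, 1 ≤ i → i ≤ k → P i ≠ 0) :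
    ∀ s t, 1 ≤ s → s ≤ k + 1 → 1 ≤ t → t ≤ k + 1 → s ≠ t →
      B (R s) (R t) = 0 ∧ B (A (P s)) (P t) = 0 := by
  have horth := h.cgOrthogonalUpTo hB hA hAdef k hP
  intro s t hs hsk ht htk hst
  rcases hst.lt_or_gt with hlt | hlt
  · obtain ⟨hRR, hPP, -⟩ := horth s t hs hlt htk
    exact ⟨hRR, hA _ _ ▸ hPP⟩
  · obtain ⟨hRR, hPP, -⟩ := horth t s ht hlt hsk
    exact ⟨hBs.eq _ _ ▸ hRR, hBs.eq _ _ ▸ hPP⟩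

end IsCGSequence

end ConjugateGradient

section Tensor

variable {n₁ n₂ n l n₃ : ℕ} [NeZero n₃]

def tUnfold (x : Tensor n₁ n₂ n₃) : Matrix (ZMod n₃ × Fin n₁) (Fin n₂) ℝ :=
  fun p j ↦ x p.1 p.2 j

omit [NeZero n₃] in
theorem eq_zero_of_tUnfold_eq_zero {x : Tensor n₁ n₂ n₃} (h : tUnfold x = 0) : x = 0 :=
  funext fun k ↦ Matrix.ext fun i j ↦ congrFun (congrFun h (k, i)) j

theorem tUnfold_tProd (C : Tensor n n n₃) (x : Tensor n l n₃) :
    tUnfold (tProd C x) = bCirc C * tUnfold x := by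
  ext ⟨k, i⟩ c
  simp [tUnfold, tProd, bCirc, Matrix.mul_apply, Matrix.sum_apply, Fintype.sum_prod_type]

theorem bCirc_transpose (C : Tensor n n n₃) : (bCirc C)ᵀ = bCirc (tTrans C) := by
  ext p q
  simp [bCirc, tTrans]

theorem tInner_eq_trace (x y : Tensor n₁ n₂ n₃) :
    tInner x y = ((tUnfold x)ᵀ * tUnfold y).trace := by
  rw [← Matrix.vec_dotProduct_vec]
  simp only [tInner, tUnfold, dotProduct, Matrix.vec, Fintype.sum_prod_type]
  exact (Finset.sum_comm.trans (Finset.sum_congr rfl fun _ _ ↦ Finset.sum_comm)).symm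

theorem trFirst_tProd_tTrans (x y : Tensor n₁ n₂ n₃) :
    trFirst (tProd (tTrans x) y) = tInner x y := by
  simp only [trFirst, tProd, tTrans, tInner, Matrix.trace_sum, zero_sub, neg_neg]
  refine Finset.sum_congr rfl fun k _ ↦ ?_
  rw [← Matrix.vec_dotProduct_vec]
  simp only [dotProduct, Matrix.vec, Fintype.sum_prod_type]
  exact Finset.sum_comm

def tInnerForm : LinearMap.BilinForm ℝ (Tensor n₁ n₂ n₃) :=
  LinearMap.mk₂ ℝ tInner
    (fun _ _ _ ↦ by simp only [tInner, Pi.add_apply, Matrix.add_apply, add_mul,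
      Finset.sum_add_distrib])
    (fun _ _ _ ↦ by simp only [tInner, Pi.smul_apply, Matrix.smul_apply, smul_eq_mul,
      Finset.mul_sum, mul_assoc])
    (fun _ _ _ ↦ by simp only [tInner, Pi.add_apply, Matrix.add_apply, mul_add,
      Finset.sum_add_distrib])
    (fun _ _ _ ↦ by simp only [tInner, Pi.smul_apply, Matrix.smul_apply, smul_eq_mul,
      Finset.mul_sum, mul_left_comm])

@[simp]
theorem tInnerForm_apply (x y : Tensor n₁ n₂ n₃) : tInnerForm x y = tInner x y := rfl

def tProdLin (C : Tensor n₁ n₂ n₃) : Tensor n₂ l n₃ →ₗ[ℝ] Tensor n₁ l n₃ where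
  toFun := tProd C
  map_add' x y := funext fun k ↦ by
    simp only [tProd, Pi.add_apply, Matrix.mul_add, Finset.sum_add_distrib]
  map_smul' c x := funext fun k ↦ by
    simp only [tProd, Pi.smul_apply, Matrix.mul_smul, Finset.smul_sum, RingHom.id_apply]

@[simp]
theorem tProdLin_apply (C : Tensor n₁ n₂ n₃) (x : Tensor n₂ l n₃) :
    tProdLin C x = tProd C x := rfl

theorem tInnerForm_isSymm : (tInnerForm : LinearMap.BilinForm ℝ (Tensor n₁ n₂ n₃)).IsSymm :=
  ⟨fun x y ↦ by simp only [tInnerForm_apply, tInner, mul_comm]⟩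

theorem eq_zero_of_tInner_self_eq_zero {x : Tensor n₁ n₂ n₃} (h : tInner x x = 0) : x = 0 := by
  rw [tInner_eq_trace, ← Matrix.conjTranspose_eq_transpose_of_trivial,
    Matrix.trace_conjTranspose_mul_self_eq_zero_iff] at h
  exact eq_zero_of_tUnfold_eq_zero h

theorem tProdLin_isAdjointPair {C : Tensor n n n₃} (hC : tTrans C = C) :
    LinearMap.IsAdjointPair tInnerForm tInnerForm (tProdLin (l := l) C) (tProdLin C) := by
  intro x y
  simp only [tInnerForm_apply, tProdLin_apply]
  rw [tInner_eq_trace, tInner_eq_trace, tUnfold_tProd, tUnfold_tProd, Matrix.transpose_mul,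
    bCirc_transpose, hC, Matrix.mul_assoc]

theorem eq_zero_of_tInner_tProd_self_eq_zero {C : Tensor n n n₃} (hC : (bCirc C).PosDef)
    {x : Tensor n l n₃} (h : tInner x (tProd C x) = 0) : x = 0 := by
  rw [tInner_eq_trace, tUnfold_tProd, ← Matrix.conjTranspose_eq_transpose_of_trivial] at h
  exact eq_zero_of_tUnfold_eq_zero (hC.eq_zero_of_trace_conjTranspose_mul_mul_eq_zero h)

end Tensor

theorem stmt_5 (n l n₃ : ℕ) [NeZero n₃] (C : Tensor n n n₃) (hC : TSymPD C)
    (D : Tensor n l n₃)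
    (X R P : ℕ → Tensor n l n₃)
    (hR : ∀ i, 1 ≤ i → R i = D - tProd C (X i))
    (hP1 : P 1 = R 1)
    (hX : ∀ i, 1 ≤ i → X (i + 1) = X i +
      (trFirst (tProd (tTrans (P i)) (R i)) /
        trFirst (tProd (tTrans (P i)) (tProd C (P i)))) • P i)
    (hP : ∀ i, 1 ≤ i → P (i + 1) = R (i + 1) -
      (trFirst (tProd (tTrans (P i)) (tProd C (R (i + 1)))) /
        trFirst (tProd (tTrans (P i)) (tProd C (P i)))) • P i)
    (k : ℕ) (hPne : ∀ i, 1 ≤ i → i ≤ k → P i ≠ 0) :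
    ∀ s t, 1 ≤ s → s ≤ k + 1 → 1 ≤ t → t ≤ k + 1 → s ≠ t →
      tInner (R s) (R t) = 0 ∧ tInner (tProd C (P s)) (P t) = 0 := by
  have hseq : IsCGSequence tInnerForm (tProdLin C) D X R P :=
    { residual := hR
      dir_one := hP1
      iterate_succ := by
        simpa only [tInnerForm_apply, tProdLin_apply, trFirst_tProd_tTrans] using hX
      dir_succ := by
        simpa only [tInnerForm_apply, tProdLin_apply, trFirst_tProd_tTrans] using hP }
  exact hseq.pairwise_orthogonal tInnerForm_isSymm (fun _ ↦ eq_zero_of_tInner_self_eq_zero)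
    (tProdLin_isAdjointPair hC.1) (fun _ ↦ eq_zero_of_tInner_tProd_self_eq_zero hC.2) k hPne
end
end

section
/- Let C ∈ ℝ^{n₁×n₂×n₃}, D ∈ ℝ^{n₁×l×n₃}, and run Algorithm 2 from an initial tensor of the form X₁ = Cᵀ⋆H for some H ∈ ℝ^{n₁×l×n₃} (in particular X₁ = 0). Then every iterate X_k that is defined (i.e., whenever Q₁,…,Q_{k−1} are nonzero) is of the form X_k = Cᵀ⋆Y_k for some tensor Y_k ∈ ℝ^{n₁×l×n₃}. -/
open Matrix Filter Topology

noncomputable section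

lemma tProd_add {n₁ n₂ l n₃ : ℕ} [NeZero n₃] (A : Tensor n₁ n₂ n₃) (B B' : Tensor n₂ l n₃) :
    tProd A (B + B') = tProd A B + tProd A B' := by
  funext k
  simp [tProd, Matrix.mul_add, Finset.sum_add_distrib]

lemma tProd_smul {n₁ n₂ l n₃ : ℕ} [NeZero n₃] (A : Tensor n₁ n₂ n₃) (c : ℝ)
    (B : Tensor n₂ l n₃) : tProd A (c • B) = c • tProd A B := by
  funext k
  simp [tProd, Finset.smul_sum, Matrix.mul_smul]

lemma tProd_sub {n₁ n₂ l n₃ : ℕ} [NeZero n₃] (A : Tensor n₁ n₂ n₃) (B B' : Tensor n₂ l n₃) :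
    tProd A (B - B') = tProd A B - tProd A B' := by
  funext k
  simp [tProd, Matrix.mul_sub, Finset.sum_sub_distrib]

theorem stmt_12 (n₁ n₂ l n₃ : ℕ) [NeZero n₃] (C : Tensor n₁ n₂ n₃)
    (D : Tensor n₁ l n₃)
    (X : ℕ → Tensor n₂ l n₃) (R : ℕ → Tensor n₁ l n₃)
    (P Q : ℕ → Tensor n₂ l n₃)
    (hR : ∀ i, 1 ≤ i → R i = D - tProd C (X i))
    (hP : ∀ i, 1 ≤ i → P i = tProd (tTrans C) (R i))
    (hQ1 : Q 1 = P 1)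
    (hX : ∀ i, 1 ≤ i → X (i + 1) = X i +
      (tInner (R i) (R i) / tInner (Q i) (Q i)) • Q i)
    (hQ : ∀ i, 1 ≤ i → Q (i + 1) = P (i + 1) -
      (trFirst (tProd (tTrans (P (i + 1))) (Q i)) / tInner (Q i) (Q i)) • Q i)
    (H : Tensor n₁ l n₃) (hX1 : X 1 = tProd (tTrans C) H) :
    ∀ k, 1 ≤ k → (∀ j, 1 ≤ j → j < k → Q j ≠ 0) →
      ∃ Y : Tensor n₁ l n₃, X k = tProd (tTrans C) Y := by
  have key : ∀ k, 1 ≤ k → (∃ Y : Tensor n₁ l n₃, X k = tProd (tTrans C) Y) ∧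
      (∃ Z : Tensor n₁ l n₃, Q k = tProd (tTrans C) Z) := by
    intro k hk
    induction k with
    | zero => omega
    | succ m ih =>
      rcases Nat.eq_zero_or_pos m with h1 | h1
      · subst h1
        refine ⟨⟨H, hX1⟩, ⟨R 1, ?_⟩⟩
        rw [hQ1, hP 1 le_rfl]
      · have hm : 1 ≤ m := h1
        obtain ⟨⟨Y, hY⟩, ⟨Z, hZ⟩⟩ := ih hm
        constructor
        · exact ⟨Y + (tInner (R m) (R m) / tInner (Q m) (Q m)) • Z, by
            rw [hX m hm, hY, hZ, tProd_add, tProd_smul]⟩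
        · exact ⟨R (m+1) - (trFirst (tProd (tTrans (P (m + 1))) (Q m)) / tInner (Q m) (Q m)) • Z, by
            rw [hQ m hm, hP (m+1) (by omega), hZ, tProd_sub, tProd_smul]⟩
  intro k hk _
  exact (key k hk).1
end
end
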